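/- arXiv:2001.01357 — 3 statements merged into one kernel-verified Lean document; each statement's English description precedes it below -/
import Mathlib

section
/- Let $(X,\mathcal{B})$ be a measurable space, $\nu$ a finite measure on $X$, $\{p_a\}_{a\in K}$ probability measures with $p_a(B) \le \nu(B)$ for all measurable $B$ and $a \in K$, $w : X \to [0,\infty)$ measurable with $\lim_{M \to \infty} \sup_{a \in K} \int_X w \cdot \mathbf{1}[w \ge M] \, dp_a = 0$, and $f_n, f : X \to \mathbb{R}$ measurable with $f_n \uparrow f$ pointwise and $\sup_n \sup_{x} |f(x) - f_n(x)|/\max(w(x),1) < \infty$. Then $\sup_{a \in K} \int_X (f - f_n) \, dp_a \to 0$ as $n \to \infty$. -/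
/-!
Split `g - f n` according to whether the weight is small. On `{w < M}` the deviations are bounded
by `C * M`, so the integrals against every `p a` are dominated by the integral against `ν`, which
tends to `0` by bounded convergence. On `{M ≤ w}` the deviations are at most `C * w`, whose
integrals are uniformly small for large `M`.
-/

open MeasureTheory Filter Topology

theorem abs_le_min_add_indicator_of_abs_le_mul_max {X : Type*} {w : X → ℝ} {d : ℝ} {C M : ℝ}
    (hC : 0 ≤ C) (hM : 1 ≤ M) (x : X) (hd : |d| ≤ C * max (w x) 1) :
    |d| ≤ min |d| (C * M) + {x | M ≤ w x}.indicator (fun x => C * w x) x := by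
  by_cases hx : M ≤ w x
  · rw [max_eq_left (hM.trans hx)] at hd
    simp only [Set.indicator_of_mem (show x ∈ {x | M ≤ w x} from hx)]
    have : 0 ≤ min |d| (C * M) := le_min (abs_nonneg d) (by positivity)
    linarith
  · have : C * max (w x) 1 ≤ C * M := by gcongr; exact max_le (le_of_not_ge hx) hM
    simp only [Set.indicator_of_notMem (show x ∉ {x | M ≤ w x} from hx), add_zero]
    exact le_min le_rfl (hd.trans this)

section

variable {X ι : Type*} [MeasurableSpace X]

theorem eventually_forall_integral_lt_of_tendsto_zero_of_le_finite
    {ν : Measure X} [IsFiniteMeasure ν] {μ : ι → Measure X} (hμν : ∀ i, μ i ≤ ν)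
    {h : ℕ → X → ℝ} (hmeas : ∀ n, Measurable (h n)) (hnonneg : ∀ n x, 0 ≤ h n x)
    {B : ℝ} (hB : ∀ n x, h n x ≤ B) (hlim : ∀ x, Tendsto (fun n => h n x) atTop (𝓝 0))
    {ε : ℝ} (hε : 0 < ε) :
    ∀ᶠ n in atTop, ∀ i, ∫ x, h n x ∂μ i < ε := by
  have hbound : ∀ n x, ‖h n x‖ ≤ B := fun n x => by
    rw [Real.norm_of_nonneg (hnonneg n x)]
    exact hB n x
  have hν : Tendsto (fun n => ∫ x, h n x ∂ν) atTop (𝓝 0) := by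
    simpa using tendsto_integral_of_dominated_convergence (fun _ => B)
      (fun n => (hmeas n).aestronglyMeasurable) (integrable_const B)
      (fun n => ae_of_all _ (hbound n)) (ae_of_all _ hlim)
  filter_upwards [hν.eventually (gt_mem_nhds hε)] with n hn i
  calc ∫ x, h n x ∂μ i
      ≤ ∫ x, h n x ∂ν := integral_mono_measure (hμν i) (ae_of_all _ (hnonneg n))
        (Integrable.of_bound (hmeas n).aestronglyMeasurable B (ae_of_all _ (hbound n)))
    _ < ε := hn

theorem eventually_forall_integral_abs_lt_of_tendsto_zero_of_le_weight
    {ν : Measure X} [IsFiniteMeasure ν] {μ : ι → Measure X} (hμν : ∀ i, μ i ≤ ν)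
    {w : X → ℝ} (hwmeas : Measurable w) (hw0 : ∀ x, 0 ≤ w x) (hwint : ∀ i, Integrable w (μ i))
    (hui : ∀ ε > (0 : ℝ), ∃ M : ℝ, ∀ i, ∫ x in {x | M ≤ w x}, w x ∂(μ i) < ε)
    {h : ℕ → X → ℝ} (hmeas : ∀ n, Measurable (h n))
    (hlim : ∀ x, Tendsto (fun n => h n x) atTop (𝓝 0))
    {C : ℝ} (hC0 : 0 ≤ C) (hC : ∀ n x, |h n x| ≤ C * max (w x) 1) {ε : ℝ} (hε : 0 < ε) :
    ∀ᶠ n in atTop, ∀ i, ∫ x, |h n x| ∂μ i < ε := by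
  obtain ⟨M₀, hM₀⟩ := hui (ε / (2 * (C + 1))) (by positivity)
  set M := max M₀ 1
  have hCM : 0 ≤ C * M := by positivity
  have hA : MeasurableSet {x | M ≤ w x} := measurableSet_le measurable_const hwmeas
  have htail : ∀ i, C * ∫ x in {x | M ≤ w x}, w x ∂μ i < ε / 2 := by
    intro i
    have hmono : ∫ x in {x | M ≤ w x}, w x ∂μ i ≤ ∫ x in {x | M₀ ≤ w x}, w x ∂μ i :=
      setIntegral_mono_set (hwint i).integrableOn (ae_of_all _ hw0)
        (ae_of_all _ fun x hx => (le_max_left M₀ 1).trans hx)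
    calc C * ∫ x in {x | M ≤ w x}, w x ∂μ i ≤ C * (ε / (2 * (C + 1))) := by
          gcongr
          exact hmono.trans (hM₀ i).le
      _ < ε / 2 := by
          rw [mul_div_assoc', div_lt_div_iff₀ (by positivity) two_pos]
          nlinarith
  have htrunc := eventually_forall_integral_lt_of_tendsto_zero_of_le_finite hμν
    (h := fun n x => min |h n x| (C * M)) (fun n => (hmeas n).abs.min measurable_const)
    (fun n x => le_min (abs_nonneg _) hCM) (fun n x => min_le_right _ _)
    (fun x => by simpa [min_eq_left hCM] using (hlim x).abs.min (tendsto_const_nhds (x := C * M)))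
    (half_pos hε)
  filter_upwards [htrunc] with n hn i
  have : IsFiniteMeasure (μ i) := isFiniteMeasure_of_le ν (hμν i)
  have htrunc_int : Integrable (fun x => min |h n x| (C * M)) (μ i) :=
    Integrable.of_bound ((hmeas n).abs.min measurable_const).aestronglyMeasurable (C * M)
      (ae_of_all _ fun x => by
        rw [Real.norm_of_nonneg (le_min (abs_nonneg _) hCM)]
        exact min_le_right _ _)
  have htail_int := ((hwint i).const_mul C).indicator hA
  calc ∫ x, |h n x| ∂μ i
      ≤ ∫ x, (min |h n x| (C * M) + {x | M ≤ w x}.indicator (fun x => C * w x) x) ∂μ i :=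
        integral_mono_of_nonneg (ae_of_all _ fun x => abs_nonneg _) (htrunc_int.add htail_int)
          (ae_of_all _ fun x =>
            abs_le_min_add_indicator_of_abs_le_mul_max hC0 (le_max_right M₀ 1) x (hC n x))
    _ = ∫ x, min |h n x| (C * M) ∂μ i + C * ∫ x in {x | M ≤ w x}, w x ∂μ i := by
        rw [integral_add htrunc_int htail_int, integral_indicator hA, integral_const_mul]
    _ < ε := by linarith [hn i, htail i]

end

theorem uniform_integral_convergence_majorized_general {X K : Type*} [MeasurableSpace X]
    (ν : Measure X) [IsFiniteMeasure ν]
    (p : K → Measure X)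
    (hmaj : ∀ a, ∀ B : Set X, MeasurableSet B → p a B ≤ ν B)
    (w : X → ℝ) (hwmeas : Measurable w) (hw0 : ∀ x, 0 ≤ w x)
    (hwint : ∀ a, Integrable w (p a))
    (hui : ∀ ε > (0 : ℝ), ∃ M : ℝ, ∀ a, ∫ x in {x | M ≤ w x}, w x ∂(p a) < ε)
    (f : ℕ → X → ℝ) (g : X → ℝ)
    (hf : ∀ n, Measurable (f n))
    (hconv : ∀ x, Tendsto (fun n => f n x) atTop (nhds (g x)))
    (C : ℝ) (hC : ∀ n x, |g x - f n x| ≤ C * max (w x) 1) :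
    ∀ ε > (0 : ℝ), ∃ N : ℕ, ∀ n ≥ N, ∀ a, ∫ x, (g x - f n x) ∂(p a) < ε := by
  intro ε hε
  have hg : Measurable g := measurable_of_tendsto_metrizable hf (tendsto_pi_nhds.2 hconv)
  have hlim : ∀ x, Tendsto (fun n => g x - f n x) atTop (𝓝 0) := fun x => by
    simpa using (hconv x).const_sub (g x)
  have hC' : ∀ n x, |g x - f n x| ≤ |C| * max (w x) 1 := fun n x =>
    (hC n x).trans (by gcongr; exact le_abs_self C)
  obtain ⟨N, hN⟩ := eventually_atTop.1 <|
    eventually_forall_integral_abs_lt_of_tendsto_zero_of_le_weight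
      (fun a => Measure.le_iff.2 (hmaj a)) hwmeas hw0 hwint hui
      (fun n => hg.sub (hf n)) hlim (abs_nonneg C) hC' hε
  exact ⟨N, fun n hn a =>
    ((le_abs_self _).trans abs_integral_le_integral_abs).trans_lt (hN n hn a)⟩

theorem uniform_integral_convergence_majorized {X K : Type*} [MeasurableSpace X]
    (ν : Measure X) [IsFiniteMeasure ν]
    (p : K → Measure X) [∀ a, IsProbabilityMeasure (p a)]
    (hmaj : ∀ a, ∀ B : Set X, MeasurableSet B → p a B ≤ ν B)
    (w : X → ℝ) (hwmeas : Measurable w) (hw0 : ∀ x, 0 ≤ w x)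
    (hwint : ∀ a, Integrable w (p a))
    (hui : ∀ ε > (0 : ℝ), ∃ M : ℝ, ∀ a, ∫ x in {x | M ≤ w x}, w x ∂(p a) < ε)
    (f : ℕ → X → ℝ) (g : X → ℝ)
    (hf : ∀ n, Measurable (f n)) (hg : Measurable g)
    (hmono : ∀ x, Monotone fun n => f n x)
    (hconv : ∀ x, Tendsto (fun n => f n x) atTop (nhds (g x)))
    (C : ℝ) (hC : ∀ n x, |g x - f n x| ≤ C * max (w x) 1) :
    ∀ ε > (0 : ℝ), ∃ N : ℕ, ∀ n ≥ N, ∀ a, ∫ x, (g x - f n x) ∂(p a) < ε :=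
  uniform_integral_convergence_majorized_general ν p hmaj w hwmeas hw0 hwint hui f g hf hconv C hC
end

section
/- Let $Y$ be a metric space and $\{f_n\}$ a sequence of functions $f_n : Y \to \mathbb{R} \cup \{+\infty\}$ such that $L := \liminf_{n\to\infty} \inf_{y\in Y} f_n(y)$ is finite. Suppose $L = \inf_{y\in Y} (\underline{\mathrm{e\text{-}lim}}_n f_n)(y)$, where $\underline{\mathrm{e\text{-}lim}}_n f_n$ is the lower epi-limit of $\{f_n\}$, defined by $(\underline{\mathrm{e\text{-}lim}}_n f_n)(y) := \inf\{ r \in \mathbb{R} \mid \exists \text{ subsequence } \{n_k\} \text{ and points } y_k \to y \text{ with } \limsup_k f_{n_k}(y_k) \le r \}$ (with value $+\infty$ if no such $r$ exists). Then for every $\epsilon > 0$ there exist a compact set $K \subset Y$ and a subsequence $\{f_{n_j}\}$ such that $\inf_{y\in K} f_{n_j}(y) \le \inf_{y\in Y} f_{n_j}(y) + \epsilon$ for all sufficiently large $j$. -/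
open Filter

/-! The near-minimizers are the points `y_k` of a recovery sequence for a point where the lower
epi-limit is below `L + ε/2`; together with their limit they form a compact set, and along the
corresponding subsequence `f (φ k) (y_k)` stays below `L + ε/2` while `inf f (φ k)` eventually
exceeds `L - ε/2`, because `L` is the liminf of the infima. -/

/-- The lower epi-limit of a sequence of extended-real-valued functions, defined as
`inf { r ∈ ℝ | ∃ subsequence n_k and points y_k → y with limsup_k f_{n_k}(y_k) ≤ r }`,
with value `+∞` if no such `r` exists. -/
noncomputable def lowerEpiLim {Y : Type*} [MetricSpace Y] (f : ℕ → Y → EReal) (y : Y) : EReal :=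
  sInf {s : EReal | ∃ r : ℝ, s = (r : EReal) ∧ ∃ φ : ℕ → ℕ, StrictMono φ ∧
    ∃ yk : ℕ → Y, Tendsto yk atTop (nhds y) ∧
      limsup (fun k => f (φ k) (yk k)) atTop ≤ (r : EReal)}

open Topology

theorem eventually_lt_of_lowerEpiLim_lt {Y : Type*} [MetricSpace Y] {f : ℕ → Y → EReal}
    {y : Y} {c : EReal} (h : lowerEpiLim f y < c) :
    ∃ φ : ℕ → ℕ, StrictMono φ ∧ ∃ yk : ℕ → Y, Tendsto yk atTop (𝓝 y) ∧
      ∀ᶠ k in atTop, f (φ k) (yk k) < c := by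
  obtain ⟨_, ⟨r, rfl, φ, hφ, yk, hyk, hlimsup⟩, hrc⟩ := sInf_lt_iff.mp h
  exact ⟨φ, hφ, yk, hyk, eventually_lt_of_limsup_lt (hlimsup.trans_lt hrc)⟩

theorem epi_lim_inf_implies_compact_near_minimizers_general {Y : Type*} [MetricSpace Y]
    (f : ℕ → Y → EReal) (L : ℝ)
    (hL : liminf (fun n => ⨅ y, f n y) atTop = (L : EReal))
    (heq : (⨅ y, lowerEpiLim f y) = (L : EReal)) :
    ∀ ε : ℝ, 0 < ε → ∃ K : Set Y, IsCompact K ∧ ∃ φ : ℕ → ℕ, StrictMono φ ∧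
      ∃ J : ℕ, ∀ j ≥ J, (⨅ y ∈ K, f (φ j) y) ≤ (⨅ y, f (φ j) y) + (ε : EReal) := by
  intro ε hε
  have hupper : ⨅ y, lowerEpiLim f y < ((L + ε / 2 : ℝ) : EReal) := by
    rw [heq]; exact_mod_cast by linarith
  obtain ⟨y, hy⟩ := iInf_lt_iff.mp hupper
  obtain ⟨φ, hφ, yk, hyk, hnear⟩ := eventually_lt_of_lowerEpiLim_lt hy
  have hlower : ∀ᶠ n in atTop, ((L - ε / 2 : ℝ) : EReal) < ⨅ z, f n z :=
    eventually_lt_of_lt_liminf (by rw [hL]; exact_mod_cast by linarith) (by isBoundedDefault)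
  obtain ⟨J, hJ⟩ := (hnear.and (hφ.tendsto_atTop.eventually hlower)).exists_forall_of_atTop
  refine ⟨insert y (Set.range yk), hyk.isCompact_insert_range, φ, hφ, J, fun j hj => ?_⟩
  obtain ⟨hfj, hinf⟩ := hJ j hj
  calc (⨅ z ∈ insert y (Set.range yk), f (φ j) z) ≤ f (φ j) (yk j) :=
        iInf₂_le _ (Set.mem_insert_of_mem _ (Set.mem_range_self j))
    _ ≤ ((L - ε / 2 : ℝ) : EReal) + (ε : EReal) := by
        rw [← EReal.coe_add]; exact hfj.le.trans (by exact_mod_cast by linarith)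
    _ ≤ (⨅ z, f (φ j) z) + (ε : EReal) := add_le_add_left hinf.le _

theorem epi_lim_inf_implies_compact_near_minimizers {Y : Type*} [MetricSpace Y]
    (f : ℕ → Y → EReal) (hbot : ∀ n y, f n y ≠ ⊥) (L : ℝ)
    (hL : liminf (fun n => ⨅ y, f n y) atTop = (L : EReal))
    (heq : (⨅ y, lowerEpiLim f y) = (L : EReal)) :
    ∀ ε : ℝ, 0 < ε → ∃ K : Set Y, IsCompact K ∧ ∃ φ : ℕ → ℕ, StrictMono φ ∧
      ∃ J : ℕ, ∀ j ≥ J, (⨅ y ∈ K, f (φ j) y) ≤ (⨅ y, f (φ j) y) + (ε : EReal) :=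
  epi_lim_inf_implies_compact_near_minimizers_general f L hL heq
end

section
/- Let $X$ be a measurable space, $\nu$ a finite measure on $X$, and $(p_k)_{k\ge1}$ a sequence of probability measures on $X$ with $p_k(B) \le \nu(B)$ for every measurable set $B$ and all $k$. If $X$ has countably generated $\sigma$-algebra, then there exist a subsequence $(p_{k_j})$ and a probability measure $\bar{p}$ on $X$ such that $p_{k_j}(B) \to \bar{p}(B)$ for every measurable set $B$. -/
/-! Since `p k ≤ ν`, the maps `B ↦ p k B` are 1-Lipschitz for the pseudometric `ν (B ∆ C)` on
measurable sets, which is separable because the σ-algebra is countably generated. A diagonal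
subsequence converges on a countable dense family of sets, hence, by equicontinuity, on every
measurable set. The limit is finitely additive and dominated by the finite measure `ν`, so it is
continuous at `∅`, hence σ-additive. -/

open MeasureTheory Filter Topology
open scoped ENNReal symmDiff

theorem EquicontinuousAt.cauchy_map_of_mem_closure {ι Y α : Type*} [TopologicalSpace Y]
    [UniformSpace α] {l : Filter ι} {F : ι → Y → α} {D : Set Y} {x : Y}
    (hF : EquicontinuousAt F x) (hD : ∀ y ∈ D, Cauchy (l.map (F · y))) (hx : x ∈ closure D) :
    Cauchy (l.map (F · x)) := by
  obtain ⟨y₀, -, hy₀⟩ := mem_closure_iff_nhds.1 hx Set.univ univ_mem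
  refine cauchy_map_iff.2 ⟨(cauchy_map_iff.1 (hD y₀ hy₀)).1, fun U hU => mem_map.2 ?_⟩
  obtain ⟨V, hV, hVsymm, hVU⟩ := comp_comp_symm_mem_uniformity_sets hU
  obtain ⟨y, hxy, hyD⟩ := mem_closure_iff_nhds.1 hx _ (hF V hV)
  filter_upwards [mem_map.1 ((cauchy_map_iff.1 (hD y hyD)).2 hV)] with ij hij
  exact hVU ⟨_, ⟨_, hxy ij.1, hij⟩, SetRel.symm V (hxy ij.2)⟩

namespace MeasureTheory

variable {X : Type*} [MeasurableSpace X]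

theorem isSetRing_measurableSet : IsSetRing {s : Set X | MeasurableSet s} where
  empty_mem := .empty
  union_mem _ _ := .union
  sdiff_mem _ _ := .diff

namespace MeasuredSets

variable {ν : Measure X} [IsFiniteMeasure ν]

theorem dense_preimage_coe_of_measureDense {𝒜 : Set (Set X)} (h𝒜 : ν.MeasureDense 𝒜) :
    Dense ((SetLike.coe : MeasuredSets ν → Set X) ⁻¹' 𝒜) := by
  refine Metric.dense_iff.2 fun s ε hε => ?_
  obtain ⟨t, ht𝒜, hst⟩ := h𝒜.approx s s.2 (measure_ne_top ν s) ε hε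
  refine ⟨⟨t, h𝒜.measurable t ht𝒜⟩, ?_, ht𝒜⟩
  change ν.real (t ∆ s) < ε
  rw [symmDiff_comm]
  exact ENNReal.toReal_lt_of_lt_ofReal hst

theorem lipschitzWith_measureReal_of_le {μ : Measure X} (h : μ ≤ ν) :
    LipschitzWith 1 fun s : MeasuredSets ν => μ.real s := by
  have := isFiniteMeasure_of_le ν h
  refine LipschitzWith.of_le_add fun s t => ?_
  calc μ.real s ≤ μ.real t + μ.real ((s : Set X) ∆ t) := by
        have : μ.real s - μ.real t ≤ μ.real ((s : Set X) ∆ t) :=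
          MeasuredSets.real_sub_real_le_dist (μ := μ) ⟨s, s.2⟩ ⟨t, t.2⟩
        linarith
    _ ≤ μ.real t + dist s t := by
        gcongr
        exact ENNReal.toReal_mono (measure_ne_top ν _) (h _)

end MeasuredSets

theorem exists_subseq_tendsto_measure_of_countable {𝒜 : Set (Set X)} (h𝒜 : 𝒜.Countable)
    (μ : ℕ → Measure X) :
    ∃ φ : ℕ → ℕ, StrictMono φ ∧ ∀ t ∈ 𝒜, ∃ c, Tendsto (fun j => μ (φ j) t) atTop (𝓝 c) := by
  have := h𝒜.to_subtype
  obtain ⟨c, φ, hφ, hc⟩ := CompactSpace.tendsto_subseq fun k (t : 𝒜) => μ k t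
  exact ⟨φ, hφ, fun t ht => ⟨c ⟨t, ht⟩, tendsto_pi_nhds.1 hc ⟨t, ht⟩⟩⟩

variable {ι : Type*} {l : Filter ι} [l.NeBot] {μ : ι → Measure X} {ν : Measure X}
  [IsFiniteMeasure ν]

theorem exists_tendsto_measure_iff_cauchy_map_measureReal (hle : ∀ i, μ i ≤ ν) (s : Set X) :
    (∃ c, Tendsto (μ · s) l (𝓝 c)) ↔ Cauchy (l.map fun i => (μ i).real s) := by
  have hfin : ∀ i, μ i s ≠ ∞ := fun i => ne_top_of_le_ne_top (measure_ne_top ν s) (hle i s)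
  constructor
  · rintro ⟨c, hc⟩
    have hcν : c ≠ ∞ := ne_top_of_le_ne_top (measure_ne_top ν s) (le_of_tendsto' hc (hle · s))
    exact ((ENNReal.tendsto_toReal_iff hfin hcν).2 hc).cauchy_map
  · intro h
    obtain ⟨r, hr⟩ := cauchy_map_iff_exists_tendsto.1 h
    refine ⟨ENNReal.ofReal r, ?_⟩
    simpa only [Measure.real, ENNReal.ofReal_toReal (hfin _)] using ENNReal.tendsto_ofReal hr

theorem exists_tendsto_measure_of_measureDense (hle : ∀ i, μ i ≤ ν) {𝒜 : Set (Set X)}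
    (h𝒜 : ν.MeasureDense 𝒜) (hconv : ∀ t ∈ 𝒜, ∃ c, Tendsto (μ · t) l (𝓝 c))
    {s : Set X} (hs : MeasurableSet s) : ∃ c, Tendsto (μ · s) l (𝓝 c) := by
  simp only [exists_tendsto_measure_iff_cauchy_map_measureReal hle] at hconv ⊢
  have hequi : Equicontinuous fun i (s : MeasuredSets ν) => (μ i).real s :=
    (LipschitzWith.uniformEquicontinuous _ 1
      fun i => MeasuredSets.lipschitzWith_measureReal_of_le (hle i)).equicontinuous
  exact (hequi ⟨s, hs⟩).cauchy_map_of_mem_closure (fun t ht => hconv t ht)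
    (MeasuredSets.dense_preimage_coe_of_measureDense h𝒜 _)

theorem exists_measure_tendsto_of_le (hle : ∀ i, μ i ≤ ν)
    (hconv : ∀ s, MeasurableSet s → ∃ c, Tendsto (μ · s) l (𝓝 c)) :
    ∃ q : Measure X, ∀ s, MeasurableSet s → Tendsto (μ · s) l (𝓝 (q s)) := by
  choose! c hc using hconv
  have hcν : ∀ s, MeasurableSet s → c s ≤ ν s := fun s hs => le_of_tendsto' (hc s hs) (hle · s)
  have hc_empty : c ∅ = 0 := tendsto_nhds_unique (hc ∅ .empty) (by simp)
  let m : AddContent ℝ≥0∞ {s | MeasurableSet s} :=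
    isSetRing_measurableSet.addContent_of_union c hc_empty fun hs ht hst =>
      tendsto_nhds_unique (hc _ (hs.union ht))
        (by simpa only [measure_union hst ht] using (hc _ hs).add (hc _ ht))
  have hσ : ∀ f : ℕ → Set X, (∀ i, MeasurableSet (f i)) → Pairwise (Function.onFun Disjoint f) →
      c (⋃ i, f i) = ∑' i, c (f i) := fun f hf hd =>
    addContent_iUnion_eq_sum_of_tendsto_zero isSetRing_measurableSet m
      (fun s hs => ((hcν s hs).trans_lt (measure_lt_top ν s)).ne)
      (fun s hs hanti hempty => by
        have hν : Tendsto (ν ∘ s) atTop (𝓝 0) := by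
          simpa [hempty] using tendsto_measure_iInter_atTop
            (fun n => (hs n).nullMeasurableSet) hanti ⟨0, measure_ne_top ν _⟩
        exact tendsto_of_tendsto_of_tendsto_of_le_of_le tendsto_const_nhds hν
          (fun _ => zero_le) fun n => hcν _ (hs n))
      hf (.iUnion hf) hd
  refine ⟨Measure.ofMeasurable (fun s _ => c s) hc_empty hσ, fun s hs => ?_⟩
  rw [Measure.ofMeasurable_apply _ hs]
  exact hc s hs

end MeasureTheory

theorem setwise_compactness_of_majorized {X : Type*} [MeasurableSpace X]
    [MeasurableSpace.CountablyGenerated X]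
    (ν : Measure X) [IsFiniteMeasure ν]
    (p : ℕ → Measure X) [∀ k, IsProbabilityMeasure (p k)]
    (hmaj : ∀ k, ∀ B : Set X, MeasurableSet B → p k B ≤ ν B) :
    ∃ φ : ℕ → ℕ, StrictMono φ ∧ ∃ q : Measure X, IsProbabilityMeasure q ∧
      ∀ B : Set X, MeasurableSet B →
        Tendsto (fun j => p (φ j) B) atTop (nhds (q B)) := by
  have hle : ∀ j, p j ≤ ν := fun j => Measure.le_iff.2 (hmaj j)
  obtain ⟨𝒜, h𝒜c, h𝒜⟩ := (isSeparable_of_sigmaFinite ν).exists_countable_measureDense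
  obtain ⟨φ, hφ, hconv𝒜⟩ := exists_subseq_tendsto_measure_of_countable h𝒜c p
  obtain ⟨q, hq⟩ := exists_measure_tendsto_of_le (fun j => hle (φ j))
    fun _ hs => exists_tendsto_measure_of_measureDense (fun j => hle (φ j)) h𝒜 hconv𝒜 hs
  exact ⟨φ, hφ, q, ⟨tendsto_nhds_unique (hq _ .univ) (by simp)⟩, hq⟩
end
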